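/- arXiv:0903.3027 — 2 statements merged into one kernel-verified Lean document; each statement's English description precedes it below -/
import Mathlib

section
/- Let L ≥ log 3 and B ≥ 2 log 3 be real numbers, and let (Y_k)_{k≥0} be a sequence of nonnegative reals with Y_0 = 0 and satisfying Y_k ≤ B·k + k²·L + k·log(Y_{k-1}) for all k ≥ 1 (with the convention log of a number ≤ 1 contributes ≤ 0, i.e. Y_k ≤ B·k + k²·L + k·max(log Y_{k-1}, 0)). Then Y_k ≤ 8·(B·k + k²·L) for all k ≥ 0. -/
/-!
Write `P k = B k + k² L`. By induction `Y k ≤ 8 P k`: with `c = k + 1` and `M = B + c L`, the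
induction hypothesis gives `Y k ≤ 8 P k ≤ 8 c M` with `1 ≤ c ≤ M`, so `log (Y k) ≤ log 8 + log c + log M`,
which `log x ≤ x - 1` bounds by `7 M`. Hence `Y (k + 1) ≤ c M + c · 7 M = 8 P (k + 1)`.
-/

open Real

lemma max_log_le_seven_mul {c M y : ℝ} (hc : 1 ≤ c) (hcM : c ≤ M) (hy0 : 0 ≤ y)
    (hy : y ≤ 8 * c * M) : max (log y) 0 ≤ 7 * M := by
  refine max_le ?_ (by linarith)
  rcases hy0.eq_or_lt with rfl | hy_pos
  · simp only [log_zero]; linarith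
  have hc_pos : 0 < c := by linarith
  have hM_pos : 0 < M := by linarith
  calc log y ≤ log (8 * c * M) := log_le_log hy_pos hy
    _ = log 8 + log c + log M := by
        rw [log_mul (by positivity) hM_pos.ne', log_mul (by norm_num) hc_pos.ne']
    _ ≤ (8 - 1) + (c - 1) + (M - 1) := by
        gcongr <;> exact log_le_sub_one_of_pos (by positivity)
    _ ≤ 7 * M := by linarith

lemma le_eight_mul_of_le_add_mul_max_log {L B : ℝ} (hL : 1 ≤ L) (hB : 0 ≤ B) {Y : ℕ → ℝ}
    (hYnonneg : ∀ k, 0 ≤ Y k) (hY0 : Y 0 = 0)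
    (hY : ∀ k : ℕ, Y (k + 1) ≤ B * (k + 1) + ((k : ℝ) + 1) ^ 2 * L
      + (k + 1) * max (log (Y k)) 0) :
    ∀ k : ℕ, Y k ≤ 8 * (B * k + (k : ℝ) ^ 2 * L) := by
  intro k
  induction k with
  | zero => simp [hY0]
  | succ n ih =>
    set c : ℝ := (n : ℝ) + 1
    have hc : 1 ≤ c := by simp [c]
    have hcM : c ≤ B + c * L := by nlinarith
    have hYn : Y n ≤ 8 * c * (B + c * L) := by
      have hn : (n : ℝ) ≤ c := by simp [c]
      calc Y n ≤ 8 * (B * n + (n : ℝ) ^ 2 * L) := ih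
        _ ≤ 8 * (B * c + c ^ 2 * L) := by gcongr
        _ = 8 * c * (B + c * L) := by ring
    calc Y (n + 1) ≤ c * (B + c * L) + c * max (log (Y n)) 0 := (hY n).trans_eq (by ring)
      _ ≤ c * (B + c * L) + c * (7 * (B + c * L)) := by
          gcongr; exact max_log_le_seven_mul hc hcM (hYnonneg n) hYn
      _ = 8 * (B * ↑(n + 1) + (↑(n + 1) : ℝ) ^ 2 * L) := by push_cast; ring

theorem recursion_bound (L B : ℝ) (hL : Real.log 3 ≤ L) (hB : 2 * Real.log 3 ≤ B)
    (Y : ℕ → ℝ) (hYnonneg : ∀ k, 0 ≤ Y k) (hY0 : Y 0 = 0)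
    (hY : ∀ k : ℕ, 1 ≤ k → Y k ≤ B * k + (k : ℝ) ^ 2 * L + k * max (Real.log (Y (k - 1))) 0) :
    ∀ k : ℕ, Y k ≤ 8 * (B * k + (k : ℝ) ^ 2 * L) := by
  have hlog3 : 1 < log 3 := lt_trans (by norm_num) log_three_gt_d9
  refine le_eight_mul_of_le_add_mul_max_log (by linarith) (by linarith) hYnonneg hY0 fun k ↦ ?_
  simpa using hY (k + 1) (Nat.le_add_left 1 k)
end

section
/- Let (X_k)_{k≥0} be nonnegative reals with X_0 = 0, and suppose there are constants c ≥ 2, A ≥ 2 log 3 and L ≥ log 3 such that X_k ≤ c·(A·k + k²·L + k·max(log X_{k-1}, 0)) for all k ≥ 1. Then for all k ≥ 0, X_k ≤ 8c·((A + log c)·k + k²·L). -/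
/-!
Write `B = A + log c` and `S = B + k L`. If `X_{k-1} ≤ 8c(B(k-1) + (k-1)²L) ≤ 8ckS`, then
`log X_{k-1} ≤ log 8 + log c + log k + log S ≤ 7S`, using `log 8 ≤ 3 log 3 ≤ 3B/2`,
`log c ≤ B`, `log k ≤ kL` and `log S ≤ S`. Feeding this into the recursion gives
`X_k ≤ c(Ak + k²L + 7kS) ≤ 8c(Bk + k²L)`, which closes the induction.
-/

open Real

lemma log_eight_le_three_mul_log_three : log 8 ≤ 3 * log 3 := by
  calc log 8 ≤ log (3 ^ 3) := log_le_log (by norm_num) (by norm_num)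
    _ = 3 * log 3 := by rw [log_pow]; norm_num

lemma max_log_le_of_le {x M T : ℝ} (hx : 0 ≤ x) (hxM : x ≤ M) (hT : 0 ≤ T)
    (hMT : log M ≤ T) : max (log x) 0 ≤ T := by
  refine max_le ?_ hT
  rcases hx.eq_or_lt with rfl | hx
  · simpa using hT
  · exact (log_le_log hx hxM).trans hMT

lemma log_mul_le_seven_mul {c B L k : ℝ} (hc : 0 < c) (hcB : log c ≤ B)
    (h8B : log 8 ≤ 3 / 2 * B) (hL : 1 ≤ L) (hk : 1 ≤ k) :
    log (8 * c * (k * (B + k * L))) ≤ 7 * (B + k * L) := by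
  have hB : 0 ≤ B := by linarith [log_pos (by norm_num : (1 : ℝ) < 8)]
  have hkL : k ≤ k * L := le_mul_of_one_le_right (by linarith) hL
  have hS : 0 < B + k * L := by linarith
  have hlogk := log_le_sub_one_of_pos (by linarith : 0 < k)
  have hlogS := log_le_sub_one_of_pos hS
  rw [log_mul (by positivity) (by positivity), log_mul (by positivity) (by positivity),
    log_mul (by positivity) (by positivity)]
  linarith

lemma recursion_step {c A L k x y : ℝ} (hc : 1 ≤ c) (hA : 2 * log 3 ≤ A) (hL : 1 ≤ L)
    (hk : 1 ≤ k) (hx : 0 ≤ x)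
    (hxb : x ≤ 8 * c * ((A + log c) * (k - 1) + (k - 1) ^ 2 * L))
    (hy : y ≤ c * (A * k + k ^ 2 * L + k * max (log x) 0)) :
    y ≤ 8 * c * ((A + log c) * k + k ^ 2 * L) := by
  set B := A + log c with hB_def
  have hc0 : 0 ≤ c := by linarith
  have hk0 : 0 ≤ k := by linarith
  have hAB : A ≤ B := by linarith [log_nonneg hc]
  have h8B : log 8 ≤ 3 / 2 * B := by
    linarith [log_eight_le_three_mul_log_three]
  have hB : 0 ≤ B := by linarith [log_three_gt_d9]
  have hxS : x ≤ 8 * c * (k * (B + k * L)) := by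
    refine hxb.trans (mul_le_mul_of_nonneg_left ?_ (by positivity))
    nlinarith
  have hT : max (log x) 0 ≤ 7 * (B + k * L) :=
    max_log_le_of_le hx hxS (by positivity)
      (log_mul_le_seven_mul (by linarith) (by linarith [log_three_gt_d9]) h8B hL hk)
  calc y ≤ c * (A * k + k ^ 2 * L + k * max (log x) 0) := hy
    _ ≤ c * (A * k + k ^ 2 * L + k * (7 * (B + k * L))) := by gcongr
    _ = 8 * c * (B * k + k ^ 2 * L) - c * k * (B - A) := by ring
    _ ≤ 8 * c * (B * k + k ^ 2 * L) := by
      have : 0 ≤ c * k * (B - A) := mul_nonneg (mul_nonneg hc0 hk0) (sub_nonneg.2 hAB)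
      linarith

theorem scaled_recursion_bound (c A L : ℝ) (hc : 2 ≤ c) (hA : 2 * Real.log 3 ≤ A)
    (hL : Real.log 3 ≤ L) (X : ℕ → ℝ) (hXnonneg : ∀ k, 0 ≤ X k) (hX0 : X 0 = 0)
    (hX : ∀ k : ℕ, 1 ≤ k →
      X k ≤ c * (A * k + (k : ℝ) ^ 2 * L + k * max (Real.log (X (k - 1))) 0)) :
    ∀ k : ℕ, X k ≤ 8 * c * ((A + Real.log c) * k + (k : ℝ) ^ 2 * L) := by
  have hL1 : 1 ≤ L := by linarith [log_three_gt_d9]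
  intro k
  induction k with
  | zero => simp [hX0]
  | succ n ih =>
    have hrec := hX (n + 1) (by omega)
    rw [Nat.add_sub_cancel] at hrec
    refine recursion_step (k := (n + 1 : ℕ)) (by linarith) hA hL1 (by simp) (hXnonneg n) ?_ hrec
    simpa using ih
end
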